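/- In the Jacobi group Jac(V,Ω), the adjoint action is Ad_{(g,A,B)}(S',A',B') = (gS'g^{-1}, gA' - gS'g^{-1}A, B' + (A^T J g A')^{sym} - ½(A^T J g S' g^{-1} A)^{sym}), where J is the matrix of Ω; in particular, the formula (g,A,B)·(A',B') := (gA', B' + (A^T J g A')^{sym}) defines a left action of the Jacobi group on the Heisenberg Lie algebra by Lie algebra automorphisms. -/

import Mathlib

open Matrix

attribute [local instance] Matrix.normedAddCommGroup Matrix.normedSpace

/-- The symmetric part of a square matrix. -/
noncomputable def symPartM {m : Type*} [Fintype m] (M : Matrix m m ℝ) : Matrix m m ℝ :=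
  (1 / 2 : ℝ) • (M + Mᵀ)

/-- The cocycle `ℬ(A,A') = ½ (Aᵀ J A')^sym` of the generalized Heisenberg group. -/
noncomputable def BmatJ {k d : ℕ} (J : Matrix (Fin (2 * k)) (Fin (2 * k)) ℝ)
    (A A' : Matrix (Fin (2 * k)) (Fin d) ℝ) : Matrix (Fin d) (Fin d) ℝ :=
  (1 / 2 : ℝ) • symPartM (Aᵀ * J * A')

/-- Multiplication of the (generalized) Jacobi group
`(g,A,B)(h,A',B') = (gh, A + gA', B + B' + ℬ(A, gA'))`. -/
noncomputable def jacMulMat {k d : ℕ} (J : Matrix (Fin (2 * k)) (Fin (2 * k)) ℝ)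
    (x y : Matrix (Fin (2 * k)) (Fin (2 * k)) ℝ × Matrix (Fin (2 * k)) (Fin d) ℝ ×
      Matrix (Fin d) (Fin d) ℝ) :
    Matrix (Fin (2 * k)) (Fin (2 * k)) ℝ × Matrix (Fin (2 * k)) (Fin d) ℝ ×
      Matrix (Fin d) (Fin d) ℝ :=
  (x.1 * y.1, (x.2.1 + x.1 * y.2.1, x.2.2 + y.2.2 + BmatJ J x.2.1 (x.1 * y.2.1)))

/-- The action `(g,A,B)·(A',B') = (gA', B' + (Aᵀ J g A')^sym)` of the Jacobi group on the
Heisenberg Lie algebra. -/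
noncomputable def jacActHeis {k d : ℕ} (J : Matrix (Fin (2 * k)) (Fin (2 * k)) ℝ)
    (g : Matrix (Fin (2 * k)) (Fin (2 * k)) ℝ) (A : Matrix (Fin (2 * k)) (Fin d) ℝ)
    (z : Matrix (Fin (2 * k)) (Fin d) ℝ × Matrix (Fin d) (Fin d) ℝ) :
    Matrix (Fin (2 * k)) (Fin d) ℝ × Matrix (Fin d) (Fin d) ℝ :=
  (g * z.1, z.2 + symPartM (Aᵀ * J * g * z.1))

/-- The bracket `[(A,B),(A',B')] = (0, (Aᵀ J A')^sym)` of the Heisenberg Lie algebra. -/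
noncomputable def heisBr {k d : ℕ} (J : Matrix (Fin (2 * k)) (Fin (2 * k)) ℝ)
    (z z' : Matrix (Fin (2 * k)) (Fin d) ℝ × Matrix (Fin d) (Fin d) ℝ) :
    Matrix (Fin (2 * k)) (Fin d) ℝ × Matrix (Fin d) (Fin d) ℝ :=
  (0, symPartM (z.1ᵀ * J * z'.1))

/-! The conjugation formula is a direct expansion of the group law, where the cocycle terms
`ℬ(A₂, h(-g⁻¹A))` are moved by `g` using `gᵀ J g = J`. Differentiating it at the identity is
the Leibniz rule for the bilinear cocycle `ℬ`, whose antisymmetry (from `Jᵀ = -J`) merges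
the two terms `ℬ(A, gA') - ℬ(gA', A)` into `(Aᵀ J g A')^sym`. The action on the Heisenberg
algebra is multiplicative and preserves the bracket because symplectic `g` preserves
`(X, Y) ↦ Xᵀ J Y`. -/

section SymPart

variable {m : Type*} [Fintype m]

lemma symPartM_add (M N : Matrix m m ℝ) : symPartM (M + N) = symPartM M + symPartM N := by
  simp only [symPartM, transpose_add]
  module

lemma symPartM_neg (M : Matrix m m ℝ) : symPartM (-M) = -symPartM M := by
  simp only [symPartM, transpose_neg]
  module

lemma symPartM_zero : symPartM (0 : Matrix m m ℝ) = 0 := by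
  simp [symPartM]

lemma symPartM_transpose (M : Matrix m m ℝ) : symPartM Mᵀ = symPartM M := by
  simp [symPartM, add_comm]

end SymPart

section MatrixDeriv

variable {m n p : Type*}

lemma hasDerivAt_matrix_iff [Fintype m] [Fintype n] {f : ℝ → Matrix m n ℝ}
    {f' : Matrix m n ℝ} {t : ℝ} :
    HasDerivAt f f' t ↔ ∀ i j, HasDerivAt (fun s => f s i j) (f' i j) t :=
  hasDerivAt_pi.trans (forall_congr' fun _ => hasDerivAt_pi)

variable [Fintype m] [Fintype n] [Fintype p]

lemma HasDerivAt.matrix_mul {f : ℝ → Matrix m n ℝ} {g : ℝ → Matrix n p ℝ}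
    {f' : Matrix m n ℝ} {g' : Matrix n p ℝ} {t : ℝ}
    (hf : HasDerivAt f f' t) (hg : HasDerivAt g g' t) :
    HasDerivAt (fun s => f s * g s) (f' * g t + f t * g') t := by
  rw [hasDerivAt_matrix_iff] at hf hg ⊢
  intro i j
  simp only [Matrix.mul_apply, Matrix.add_apply, ← Finset.sum_add_distrib]
  exact HasDerivAt.fun_sum fun l _ => (hf i l).mul (hg l j)

lemma HasDerivAt.const_matrix_mul {g : ℝ → Matrix n p ℝ} {g' : Matrix n p ℝ} {t : ℝ}
    (P : Matrix m n ℝ) (hg : HasDerivAt g g' t) :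
    HasDerivAt (fun s => P * g s) (P * g') t := by
  simpa using (hasDerivAt_const t P).matrix_mul hg

lemma HasDerivAt.matrix_mul_const {f : ℝ → Matrix m n ℝ} {f' : Matrix m n ℝ} {t : ℝ}
    (hf : HasDerivAt f f' t) (Q : Matrix n p ℝ) :
    HasDerivAt (fun s => f s * Q) (f' * Q) t := by
  simpa using hf.matrix_mul (hasDerivAt_const t Q)

lemma HasDerivAt.matrix_transpose {f : ℝ → Matrix m n ℝ} {f' : Matrix m n ℝ} {t : ℝ}
    (hf : HasDerivAt f f' t) : HasDerivAt (fun s => (f s)ᵀ) f'ᵀ t := by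
  rw [hasDerivAt_matrix_iff] at hf ⊢
  exact fun i j => hf j i

lemma HasDerivAt.symPartM {f : ℝ → Matrix m m ℝ} {f' : Matrix m m ℝ} {t : ℝ}
    (hf : HasDerivAt f f' t) : HasDerivAt (fun s => symPartM (f s)) (symPartM f') t :=
  (hf.fun_add hf.matrix_transpose).fun_const_smul _

end MatrixDeriv

lemma transpose_mul_mul_mul_of_preserves {n m p : Type*} [Fintype n]
    {J g : Matrix n n ℝ} (hg : gᵀ * J * g = J) (X : Matrix n m ℝ) (Y : Matrix n p ℝ) :
    (g * X)ᵀ * J * (g * Y) = Xᵀ * J * Y := by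
  calc (g * X)ᵀ * J * (g * Y) = Xᵀ * (gᵀ * J * g) * Y := by
        simp only [transpose_mul, Matrix.mul_assoc]
    _ = Xᵀ * J * Y := by rw [hg]

section Cocycle

variable {k d : ℕ} (J : Matrix (Fin (2 * k)) (Fin (2 * k)) ℝ)

lemma BmatJ_add_left (X Y Z : Matrix (Fin (2 * k)) (Fin d) ℝ) :
    BmatJ J (X + Y) Z = BmatJ J X Z + BmatJ J Y Z := by
  simp only [BmatJ, transpose_add, Matrix.add_mul, symPartM_add, smul_add]

lemma BmatJ_add_right (X Y Z : Matrix (Fin (2 * k)) (Fin d) ℝ) :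
    BmatJ J X (Y + Z) = BmatJ J X Y + BmatJ J X Z := by
  simp only [BmatJ, Matrix.mul_add, symPartM_add, smul_add]

lemma BmatJ_neg_right (X Y : Matrix (Fin (2 * k)) (Fin d) ℝ) :
    BmatJ J X (-Y) = -BmatJ J X Y := by
  simp only [BmatJ, Matrix.mul_neg, symPartM_neg, smul_neg]

lemma BmatJ_zero_left (Y : Matrix (Fin (2 * k)) (Fin d) ℝ) : BmatJ J 0 Y = 0 := by
  simp [BmatJ, symPartM_zero]

lemma BmatJ_comm_of_transpose_eq_neg (hanti : Jᵀ = -J) (X Y : Matrix (Fin (2 * k)) (Fin d) ℝ) :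
    BmatJ J Y X = -BmatJ J X Y := by
  have : Yᵀ * J * X = -(Xᵀ * J * Y)ᵀ := by
    simp only [transpose_mul, hanti, transpose_transpose, Matrix.mul_neg, Matrix.neg_mul,
      Matrix.mul_assoc, neg_neg]
  simp only [BmatJ, this, symPartM_neg, symPartM_transpose, smul_neg]

lemma HasDerivAt.bmatJ {X Y : ℝ → Matrix (Fin (2 * k)) (Fin d) ℝ}
    {X' Y' : Matrix (Fin (2 * k)) (Fin d) ℝ} {t : ℝ}
    (hX : HasDerivAt X X' t) (hY : HasDerivAt Y Y' t) :
    HasDerivAt (fun s => BmatJ J (X s) (Y s)) (BmatJ J X' (Y t) + BmatJ J (X t) Y') t := by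
  have h := ((hX.matrix_transpose.matrix_mul_const J).matrix_mul hY).symPartM.fun_const_smul
    (1 / 2 : ℝ)
  exact h.congr_deriv (by simp only [BmatJ, symPartM_add, smul_add])

variable {J}

lemma BmatJ_mul_mul_of_preserves {g : Matrix (Fin (2 * k)) (Fin (2 * k)) ℝ}
    (hg : gᵀ * J * g = J) (X Y : Matrix (Fin (2 * k)) (Fin d) ℝ) :
    BmatJ J (g * X) (g * Y) = BmatJ J X Y := by
  rw [BmatJ, transpose_mul_mul_mul_of_preserves hg, BmatJ]

end Cocycle

section Jacobi

variable {k d : ℕ} {J g : Matrix (Fin (2 * k)) (Fin (2 * k)) ℝ}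

lemma jacMulMat_conj (hg : gᵀ * J * g = J) (A : Matrix (Fin (2 * k)) (Fin d) ℝ)
    (B : Matrix (Fin d) (Fin d) ℝ) (h : Matrix (Fin (2 * k)) (Fin (2 * k)) ℝ)
    (A₂ : Matrix (Fin (2 * k)) (Fin d) ℝ) (B₂ : Matrix (Fin d) (Fin d) ℝ) :
    jacMulMat J (g, (A, B)) (jacMulMat J (h, (A₂, B₂)) (g⁻¹, (-(g⁻¹ * A), -B))) =
      (g * h * g⁻¹, (A + g * A₂ - g * h * g⁻¹ * A,
        B₂ + BmatJ J A (g * A₂) - BmatJ J (A + g * A₂) (g * h * g⁻¹ * A))) := by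
  have hconj : g * (h * -(g⁻¹ * A)) = -(g * h * g⁻¹ * A) := by
    simp only [Matrix.mul_neg, Matrix.mul_assoc]
  have hcocycle : BmatJ J A₂ (h * -(g⁻¹ * A)) = -BmatJ J (g * A₂) (g * h * g⁻¹ * A) := by
    rw [← BmatJ_mul_mul_of_preserves hg, hconj, BmatJ_neg_right]
  simp only [jacMulMat, Prod.mk.injEq, Matrix.mul_add, hconj, hcocycle, BmatJ_add_right,
    BmatJ_neg_right, BmatJ_add_left, Matrix.mul_assoc]
  refine ⟨trivial, by abel, by abel⟩

lemma jacActHeis_one_zero (z : Matrix (Fin (2 * k)) (Fin d) ℝ × Matrix (Fin d) (Fin d) ℝ) :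
    jacActHeis J 1 0 z = z := by
  simp [jacActHeis, symPartM]

lemma jacActHeis_mul {g₁ g₂ : Matrix (Fin (2 * k)) (Fin (2 * k)) ℝ} (hg₁ : g₁ᵀ * J * g₁ = J)
    (A₁ A₂ : Matrix (Fin (2 * k)) (Fin d) ℝ)
    (z : Matrix (Fin (2 * k)) (Fin d) ℝ × Matrix (Fin d) (Fin d) ℝ) :
    jacActHeis J (g₁ * g₂) (A₁ + g₁ * A₂) z = jacActHeis J g₁ A₁ (jacActHeis J g₂ A₂ z) := by
  have hsplit : (A₁ + g₁ * A₂)ᵀ * J * (g₁ * g₂) * z.1 =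
      A₁ᵀ * J * g₁ * (g₂ * z.1) + (g₁ * A₂)ᵀ * J * (g₁ * (g₂ * z.1)) := by
    simp only [transpose_add, Matrix.add_mul, Matrix.mul_assoc]
  simp only [jacActHeis, Prod.mk.injEq, hsplit, symPartM_add,
    transpose_mul_mul_mul_of_preserves hg₁]
  refine ⟨Matrix.mul_assoc _ _ _, ?_⟩
  simp only [Matrix.mul_assoc]
  abel

lemma jacActHeis_heisBr (hg : gᵀ * J * g = J) (A : Matrix (Fin (2 * k)) (Fin d) ℝ)
    (z z' : Matrix (Fin (2 * k)) (Fin d) ℝ × Matrix (Fin d) (Fin d) ℝ) :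
    jacActHeis J g A (heisBr J z z') = heisBr J (jacActHeis J g A z) (jacActHeis J g A z') := by
  simp only [jacActHeis, heisBr, Matrix.mul_zero, symPartM_zero, add_zero,
    transpose_mul_mul_mul_of_preserves hg]

end Jacobi

theorem jacobi_adjoint_action_general (k d : ℕ)
    (J : Matrix (Fin (2 * k)) (Fin (2 * k)) ℝ) (hanti : Jᵀ = -J)
    (g : Matrix (Fin (2 * k)) (Fin (2 * k)) ℝ) (hg : gᵀ * J * g = J)
    (hgdet : IsUnit g.det)
    (A : Matrix (Fin (2 * k)) (Fin d) ℝ) (B : Matrix (Fin d) (Fin d) ℝ)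
    (S' : Matrix (Fin (2 * k)) (Fin (2 * k)) ℝ) (A' : Matrix (Fin (2 * k)) (Fin d) ℝ)
    (B' : Matrix (Fin d) (Fin d) ℝ)
    (cg : ℝ → Matrix (Fin (2 * k)) (Fin (2 * k)) ℝ)
    (cA : ℝ → Matrix (Fin (2 * k)) (Fin d) ℝ) (cB : ℝ → Matrix (Fin d) (Fin d) ℝ)
    (hcg0 : cg 0 = 1) (hcA0 : cA 0 = 0)
    (hcg : HasDerivAt cg S' 0) (hcA : HasDerivAt cA A' 0) (hcB : HasDerivAt cB B' 0) :
    (∀ (h : Matrix (Fin (2 * k)) (Fin (2 * k)) ℝ)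
        (A₂ : Matrix (Fin (2 * k)) (Fin d) ℝ) (B₂ : Matrix (Fin d) (Fin d) ℝ),
      jacMulMat J (g, (A, B)) (jacMulMat J (h, (A₂, B₂)) (g⁻¹, (-(g⁻¹ * A), -B))) =
        (g * h * g⁻¹, (A + g * A₂ - g * h * g⁻¹ * A,
          B₂ + BmatJ J A (g * A₂) - BmatJ J (A + g * A₂) (g * h * g⁻¹ * A)))) ∧
    HasDerivAt (fun t => g * cg t * g⁻¹) (g * S' * g⁻¹) 0 ∧
    HasDerivAt (fun t => A + g * cA t - g * cg t * g⁻¹ * A)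
      (g * A' - g * S' * g⁻¹ * A) 0 ∧
    HasDerivAt
      (fun t => cB t + BmatJ J A (g * cA t) -
        BmatJ J (A + g * cA t) (g * cg t * g⁻¹ * A))
      (B' + symPartM (Aᵀ * J * g * A') -
        (1 / 2 : ℝ) • symPartM (Aᵀ * J * g * S' * g⁻¹ * A)) 0 ∧
    (∀ z : Matrix (Fin (2 * k)) (Fin d) ℝ × Matrix (Fin d) (Fin d) ℝ,
      jacActHeis J (1 : Matrix (Fin (2 * k)) (Fin (2 * k)) ℝ) 0 z = z) ∧
    (∀ (g₁ g₂ : Matrix (Fin (2 * k)) (Fin (2 * k)) ℝ),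
      g₁ᵀ * J * g₁ = J → g₂ᵀ * J * g₂ = J →
      ∀ (A₁ A₂ : Matrix (Fin (2 * k)) (Fin d) ℝ)
        (z : Matrix (Fin (2 * k)) (Fin d) ℝ × Matrix (Fin d) (Fin d) ℝ),
        jacActHeis J (g₁ * g₂) (A₁ + g₁ * A₂) z =
          jacActHeis J g₁ A₁ (jacActHeis J g₂ A₂ z)) ∧
    (∀ z z' : Matrix (Fin (2 * k)) (Fin d) ℝ × Matrix (Fin d) (Fin d) ℝ,
      jacActHeis J g A (heisBr J z z') =
        heisBr J (jacActHeis J g A z) (jacActHeis J g A z')) := by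
  have hS : HasDerivAt (fun t => g * cg t * g⁻¹) (g * S' * g⁻¹) 0 :=
    (hcg.const_matrix_mul g).matrix_mul_const g⁻¹
  have hX : HasDerivAt (fun t => A + g * cA t) (g * A') 0 :=
    (hcA.const_matrix_mul g).const_add A
  have hY := hS.matrix_mul_const A
  have hY0 : g * cg 0 * g⁻¹ * A = A := by
    rw [hcg0, Matrix.mul_one, mul_nonsing_inv g hgdet, Matrix.one_mul]
  refine ⟨jacMulMat_conj hg A B, hS, ?_, ?_, jacActHeis_one_zero,
    fun _ _ hg₁ _ => jacActHeis_mul hg₁, jacActHeis_heisBr hg A⟩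
  · exact hX.fun_sub hY
  · have hB := (hcB.fun_add ((hasDerivAt_const 0 A).bmatJ J (hcA.const_matrix_mul g))).fun_sub
      (hX.bmatJ J hY)
    refine hB.congr_deriv ?_
    rw [hY0, hcA0, Matrix.mul_zero, add_zero, BmatJ_zero_left, zero_add,
      BmatJ_comm_of_transpose_eq_neg J hanti A (g * A')]
    simp only [BmatJ, Matrix.mul_assoc]
    module

/-- In the Jacobi group, the adjoint action is
`Ad_{(g,A,B)}(S',A',B') = (gS'g⁻¹, gA' - gS'g⁻¹A,
B' + (AᵀJgA')^sym - ½(AᵀJgS'g⁻¹A)^sym)`: conjugation by `(g,A,B)` has the explicit form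
below, and differentiating it along any curve through the identity with derivative
`(S',A',B')` yields the stated formula.  In particular,
`(g,A,B)·(A',B') := (gA', B' + (AᵀJgA')^sym)` defines a left action of the Jacobi group on
the Heisenberg Lie algebra by Lie algebra automorphisms. -/
theorem jacobi_adjoint_action (k d : ℕ)
    (J : Matrix (Fin (2 * k)) (Fin (2 * k)) ℝ) (hanti : Jᵀ = -J) (hJ : IsUnit J.det)
    (g : Matrix (Fin (2 * k)) (Fin (2 * k)) ℝ) (hg : gᵀ * J * g = J)
    (hgdet : IsUnit g.det)
    (A : Matrix (Fin (2 * k)) (Fin d) ℝ) (B : Matrix (Fin d) (Fin d) ℝ) (hB : Bᵀ = B)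
    (S' : Matrix (Fin (2 * k)) (Fin (2 * k)) ℝ) (A' : Matrix (Fin (2 * k)) (Fin d) ℝ)
    (B' : Matrix (Fin d) (Fin d) ℝ)
    (cg : ℝ → Matrix (Fin (2 * k)) (Fin (2 * k)) ℝ)
    (cA : ℝ → Matrix (Fin (2 * k)) (Fin d) ℝ) (cB : ℝ → Matrix (Fin d) (Fin d) ℝ)
    (hcg0 : cg 0 = 1) (hcA0 : cA 0 = 0) (hcB0 : cB 0 = 0)
    (hcg : HasDerivAt cg S' 0) (hcA : HasDerivAt cA A' 0) (hcB : HasDerivAt cB B' 0) :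
    (∀ (h : Matrix (Fin (2 * k)) (Fin (2 * k)) ℝ)
        (A₂ : Matrix (Fin (2 * k)) (Fin d) ℝ) (B₂ : Matrix (Fin d) (Fin d) ℝ),
      jacMulMat J (g, (A, B)) (jacMulMat J (h, (A₂, B₂)) (g⁻¹, (-(g⁻¹ * A), -B))) =
        (g * h * g⁻¹, (A + g * A₂ - g * h * g⁻¹ * A,
          B₂ + BmatJ J A (g * A₂) - BmatJ J (A + g * A₂) (g * h * g⁻¹ * A)))) ∧
    HasDerivAt (fun t => g * cg t * g⁻¹) (g * S' * g⁻¹) 0 ∧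
    HasDerivAt (fun t => A + g * cA t - g * cg t * g⁻¹ * A)
      (g * A' - g * S' * g⁻¹ * A) 0 ∧
    HasDerivAt
      (fun t => cB t + BmatJ J A (g * cA t) -
        BmatJ J (A + g * cA t) (g * cg t * g⁻¹ * A))
      (B' + symPartM (Aᵀ * J * g * A') -
        (1 / 2 : ℝ) • symPartM (Aᵀ * J * g * S' * g⁻¹ * A)) 0 ∧
    (∀ z : Matrix (Fin (2 * k)) (Fin d) ℝ × Matrix (Fin d) (Fin d) ℝ,
      jacActHeis J (1 : Matrix (Fin (2 * k)) (Fin (2 * k)) ℝ) 0 z = z) ∧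
    (∀ (g₁ g₂ : Matrix (Fin (2 * k)) (Fin (2 * k)) ℝ),
      g₁ᵀ * J * g₁ = J → g₂ᵀ * J * g₂ = J →
      ∀ (A₁ A₂ : Matrix (Fin (2 * k)) (Fin d) ℝ)
        (z : Matrix (Fin (2 * k)) (Fin d) ℝ × Matrix (Fin d) (Fin d) ℝ),
        jacActHeis J (g₁ * g₂) (A₁ + g₁ * A₂) z =
          jacActHeis J g₁ A₁ (jacActHeis J g₂ A₂ z)) ∧
    (∀ z z' : Matrix (Fin (2 * k)) (Fin d) ℝ × Matrix (Fin d) (Fin d) ℝ,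
      jacActHeis J g A (heisBr J z z') =
        heisBr J (jacActHeis J g A z) (jacActHeis J g A z')) :=
  jacobi_adjoint_action_general k d J hanti g hg hgdet A B S' A' B' cg cA cB hcg0 hcA0 hcg hcA hcB
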